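/- arXiv:1201.4066 — 6 statements merged into one kernel-verified Lean document; each statement's English description precedes it below -/
import Mathlib

section
/- For indeterminates A_1,...,A_n, B_1,...,B_n, the identity A_1⋯A_n − B_1⋯B_n = (1/2^{n-1}) · Σ_{e ∈ E₋ⁿ} ∏_{i=1}^n (A_i + e_i B_i) holds, where E₋ⁿ is the set of vectors e ∈ {-1,1}ⁿ with an odd number of components equal to -1. -/
/-!
Expanding `∏ i, (A i + ε_i B i)` over all sign vectors `ε ∈ {±1}ⁿ` gives `∏ i, (2 A i)`, and
weighting each term by `∏ i, ε_i` gives `∏ i, (2 B i)`. Subtracting the two sums kills the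
vectors with an even number of `-1`s and doubles the others, so twice the sum over odd vectors
is `2ⁿ (∏ A - ∏ B)`.
-/

open Finset

section SignVectors

variable {R : Type*} [CommRing R] {ι : Type*} [Fintype ι]

theorem sum_bool_add_sign_mul (a b : R) :
    ∑ s : Bool, (a + (if s then -1 else 1) * b) = 2 * a := by
  simp only [Fintype.sum_bool, if_true, Bool.false_eq_true, if_false]
  ring

theorem sum_bool_sign_mul_add_sign_mul (a b : R) :
    ∑ s : Bool, (if s then -1 else 1) * (a + (if s then -1 else 1) * b) = 2 * b := by
  simp only [Fintype.sum_bool, if_true, Bool.false_eq_true, if_false]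
  ring

theorem neg_one_pow_card_filter_eq_prod_sign (e : ι → Bool) :
    (-1 : R) ^ #{i | e i = true} = ∏ i, (if e i then -1 else 1) := by
  rw [prod_ite, prod_const, prod_const, one_pow, mul_one]

theorem sub_neg_one_pow_mul (k : ℕ) (x : R) :
    x - (-1) ^ k * x = if Odd k then 2 * x else 0 := by
  rcases Nat.even_or_odd k with hk | hk
  · simp [hk.neg_one_pow, Nat.not_odd_iff_even.mpr hk]
  · simp only [hk.neg_one_pow, hk, if_true]
    ring

variable [DecidableEq ι]

theorem sum_prod_add_sign_mul (A B : ι → R) :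
    ∑ e : ι → Bool, ∏ i, (A i + (if e i then -1 else 1) * B i) =
      2 ^ Fintype.card ι * ∏ i, A i := by
  rw [← Fintype.prod_sum (fun i (s : Bool) => A i + (if s then -1 else 1) * B i)]
  simp only [sum_bool_add_sign_mul, prod_mul_distrib, prod_const, card_univ]

theorem sum_neg_one_pow_mul_prod_add_sign_mul (A B : ι → R) :
    ∑ e : ι → Bool, (-1 : R) ^ #{i | e i = true} * ∏ i, (A i + (if e i then -1 else 1) * B i) =
      2 ^ Fintype.card ι * ∏ i, B i := by
  simp only [neg_one_pow_card_filter_eq_prod_sign, ← prod_mul_distrib]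
  rw [← Fintype.prod_sum
    (fun i (s : Bool) => (if s then -1 else 1) * (A i + (if s then -1 else 1) * B i))]
  simp only [sum_bool_sign_mul_add_sign_mul, prod_mul_distrib, prod_const, card_univ]

theorem two_mul_sum_odd_prod_add_sign_mul (A B : ι → R) :
    2 * ∑ e ∈ univ.filter (fun e : ι → Bool => Odd #{i | e i = true}),
        ∏ i, (A i + (if e i then -1 else 1) * B i) =
      2 ^ Fintype.card ι * ((∏ i, A i) - ∏ i, B i) := by
  rw [mul_sum, sum_filter, mul_sub, ← sum_prod_add_sign_mul A B,
    ← sum_neg_one_pow_mul_prod_add_sign_mul A B, ← sum_sub_distrib]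
  simp only [sub_neg_one_pow_mul]

end SignVectors

theorem prod_sub_prod_eq_sum_odd_signs_general
    (R : Type*) [CommRing R] [Algebra ℚ R] (n : ℕ)
    (A B : Fin n → R) :
    (∏ i, A i) - (∏ i, B i) =
      ((1 / 2 ^ (n - 1) : ℚ)) •
        ∑ e ∈ Finset.univ.filter
            (fun e : Fin n → Bool => Odd (Finset.univ.filter (fun i => e i = true)).card),
          ∏ i, (A i + (if e i then -1 else 1) * B i) := by
  rcases n with _ | m
  -- no sign vector of length 0 is odd, and both products are empty
  · simp
  have h2 : IsUnit (2 : R) := by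
    simpa only [map_ofNat] using (isUnit_of_invertible (2 : ℚ)).map (algebraMap ℚ R)
  have hodd := two_mul_sum_odd_prod_add_sign_mul A B
  rw [Fintype.card_fin, pow_succ', mul_assoc] at hodd
  have hpow : (2 : R) ^ m = algebraMap ℚ R (2 ^ m) := by rw [map_pow, map_ofNat]
  rw [h2.mul_left_cancel hodd, Nat.add_sub_cancel, hpow, ← Algebra.smul_def, smul_smul,
    one_div_mul_cancel (by positivity), one_smul]

theorem prod_sub_prod_eq_sum_odd_signs
    (R : Type*) [CommRing R] [Algebra ℚ R] (n : ℕ) (hn : 1 ≤ n)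
    (A B : Fin n → R) :
    (∏ i, A i) - (∏ i, B i) =
      ((1 / 2 ^ (n - 1) : ℚ)) •
        ∑ e ∈ Finset.univ.filter
            (fun e : Fin n → Bool => Odd (Finset.univ.filter (fun i => e i = true)).card),
          ∏ i, (A i + (if e i then -1 else 1) * B i) :=
  prod_sub_prod_eq_sum_odd_signs_general R n A B
end

section
/- For elements A_1,...,A_n, B_1,...,B_n of the commutative ring R, both A_1⋯A_n + B_1⋯B_n and A_1⋯A_n − B_1⋯B_n belong to the cone generated (with nonnegative rational coefficients) by products of the elements A_1+B_1,...,A_n+B_n, A_1−B_1,...,A_n−B_n. -/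
open Finset

/-- The semiring cone generated by a finite family `g : ι → R`, with nonnegative
rational coefficients: all finite sums of terms `λ • g₁^{e₁} ⋯ g_k^{e_k}` with `λ ≥ 0`. -/
def coneQ {R : Type*} [CommRing R] [Algebra ℚ R] {ι : Type*} [Fintype ι]
    (g : ι → R) : Set R :=
  {x | ∃ (N : ℕ) (c : Fin N → ℚ) (e : Fin N → ι → ℕ),
        (∀ j, 0 ≤ c j) ∧ x = ∑ j, c j • ∏ i, g i ^ e j i}

lemma mem_coneQ_of_finsetSum {R : Type*} [CommRing R] [Algebra ℚ R] {ι : Type*} [Fintype ι]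
    (g : ι → R) {κ : Type*} (s : Finset κ) (c : κ → ℚ) (e : κ → ι → ℕ)
    (hc : ∀ j ∈ s, 0 ≤ c j) :
    (∑ j ∈ s, c j • ∏ i, g i ^ e j i) ∈ coneQ g := by
  classical
  obtain ⟨σ⟩ : Nonempty (Fin s.card ≃ s) := ⟨s.equivFin.symm⟩
  refine ⟨s.card, fun j => c (σ j), fun j => e (σ j), fun j => hc _ (σ j).2, ?_⟩
  rw [← Finset.sum_attach s (fun j => c j • ∏ i, g i ^ e j i)]
  exact (Equiv.sum_comp σ (fun j => c (j : κ) • ∏ i, g (i : ι) ^ e (j : κ) i)).symm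

lemma aux {R : Type*} [CommRing R] [Algebra ℚ R] {n : ℕ} (A B : Fin n → R)
    (ε : ℚ) (hε : ε = 1 ∨ ε = -1) :
    (∏ i, A i) + ε • (∏ i, B i) ∈
      coneQ (Sum.elim (fun i => A i + B i) (fun i => A i - B i) : Fin n ⊕ Fin n → R) := by
  classical
  set g : Fin n ⊕ Fin n → R := Sum.elim (fun i => A i + B i) (fun i => A i - B i) with hg
  set c : Finset (Fin n) → ℚ := fun S => ((2:ℚ)^n)⁻¹ * (1 + ε * (-1)^S.card) with hc
  set e : Finset (Fin n) → (Fin n ⊕ Fin n) → ℕ :=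
    fun S => Sum.elim (fun i => if i ∈ S then 0 else 1) (fun i => if i ∈ S then 1 else 0) with he
  have hcpos : ∀ S ∈ (univ : Finset (Fin n)).powerset, 0 ≤ c S := by
    intro S _
    have h1 : (-1:ℚ)^S.card = 1 ∨ (-1:ℚ)^S.card = -1 := by
      rcases Nat.even_or_odd S.card with h | h
      · exact Or.inl h.neg_one_pow
      · exact Or.inr h.neg_one_pow
    rcases hε with rfl | rfl <;> rcases h1 with h | h <;> simp only [hc, h] <;> norm_num
  have key := mem_coneQ_of_finsetSum g (univ : Finset (Fin n)).powerset c e hcpos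
  set T : Finset (Fin n) → R :=
    fun S => (∏ i ∈ S, (A i - B i)) * ∏ i ∈ univ \ S, (A i + B i) with hT
  have hterm : ∀ S : Finset (Fin n), (∏ i, g i ^ e S i) = T S := by
    intro S
    rw [Fintype.prod_sum_type, hT]
    have h1 : (∏ i : Fin n, g (Sum.inl i) ^ e S (Sum.inl i)) = ∏ i ∈ univ \ S, (A i + B i) := by
      simp only [hg, he, Sum.elim_inl]
      simp [pow_ite, Finset.prod_ite, Finset.filter_mem_eq_inter, Finset.sdiff_eq_filter]
    have h2 : (∏ i : Fin n, g (Sum.inr i) ^ e S (Sum.inr i)) = ∏ i ∈ S, (A i - B i) := by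
      simp only [hg, he, Sum.elim_inr]
      simp [pow_ite, Finset.prod_ite, Finset.filter_mem_eq_inter]
    rw [h1, h2, mul_comm]
  have hsum1 : ∑ S ∈ (univ : Finset (Fin n)).powerset, T S = 2^n * ∏ i, A i := by
    rw [hT, ← Finset.prod_add]
    rw [show (∏ i : Fin n, ((A i - B i) + (A i + B i))) = ∏ i : Fin n, (2 * A i) from
      Finset.prod_congr rfl (fun i _ => by ring)]
    rw [Finset.prod_mul_distrib, Finset.prod_const, card_univ, Fintype.card_fin]
  have hsum2 : ∑ S ∈ (univ : Finset (Fin n)).powerset, ((-1:R)^S.card) * T S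
      = 2^n * ∏ i, B i := by
    have : ∀ S : Finset (Fin n), ((-1:R)^S.card) * T S
        = (∏ i ∈ S, (-(A i - B i))) * ∏ i ∈ univ \ S, (A i + B i) := by
      intro S
      rw [hT]
      rw [Finset.prod_congr rfl (fun i (_ : i ∈ S) => (neg_one_mul (A i - B i)).symm),
        Finset.prod_mul_distrib, Finset.prod_const, mul_assoc]
    rw [Finset.sum_congr rfl (fun S _ => this S), ← Finset.prod_add]
    rw [show (∏ i : Fin n, (-(A i - B i) + (A i + B i))) = ∏ i : Fin n, (2 * B i) from
      Finset.prod_congr rfl (fun i _ => by ring)]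
    rw [Finset.prod_mul_distrib, Finset.prod_const, card_univ, Fintype.card_fin]
  have halg : ∀ (q : ℚ) (x : R), q • x = algebraMap ℚ R q * x := fun q x => Algebra.smul_def q x
  have hneg : ∀ (k : ℕ) (x : R), ((-1:ℚ)^k) • x = (-1:R)^k * x := by
    intro k x
    rw [halg]
    simp
  have hX : ∑ S ∈ (univ : Finset (Fin n)).powerset, c S • ∏ i, g i ^ e S i
      = (∏ i, A i) + ε • (∏ i, B i) := by
    have step : ∀ S ∈ (univ : Finset (Fin n)).powerset, c S • ∏ i, g i ^ e S i
        = ((2:ℚ)^n)⁻¹ • (T S + ε • (((-1:R)^S.card) * T S)) := by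
      intro S _
      rw [hterm, hc]
      rw [mul_smul]
      congr 1
      rw [add_smul, one_smul, mul_smul, hneg]
    rw [Finset.sum_congr rfl step, ← Finset.smul_sum, Finset.sum_add_distrib,
      ← Finset.smul_sum, hsum1, hsum2]
    have h2n : ∀ x : R, (2:R)^n * x = ((2:ℚ)^n) • x := by
      intro x
      rw [halg, map_pow, map_ofNat]
    rw [h2n, h2n, smul_comm ε, ← smul_add, smul_smul, inv_mul_cancel₀ (by positivity), one_smul]
  rw [hX] at key
  exact key

theorem prod_add_sub_prod_mem_cone
    (R : Type*) [CommRing R] [Algebra ℚ R] (n : ℕ)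
    (A B : Fin n → R) :
    (∏ i, A i) + (∏ i, B i) ∈
        coneQ (Sum.elim (fun i => A i + B i) (fun i => A i - B i) : Fin n ⊕ Fin n → R) ∧
    (∏ i, A i) - (∏ i, B i) ∈
        coneQ (Sum.elim (fun i => A i + B i) (fun i => A i - B i) : Fin n ⊕ Fin n → R) := by
  constructor
  · have := aux A B 1 (Or.inl rfl)
    simpa using this
  · have := aux A B (-1) (Or.inr rfl)
    simpa [sub_eq_add_neg] using this
end

section
/- Let f = Σ_α c_α X^α ∈ ℝ[X_1,...,X_d] and ρ > 0. Define t(f,ρ) := Σ_α |c_α| (ρ+1)^{|α|}, where |α| = α_1 + ⋯ + α_d. Then both polynomials t(f,ρ) + f and t(f,ρ) − f belong to the quadratic module generated by ρ − ‖X‖² in ℝ[X]. -/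
open Finset MvPolynomial

/-- `p` is a sum of squares. -/
def IsSOS {d : ℕ} (p : MvPolynomial (Fin d) ℝ) : Prop :=
  ∃ (k : ℕ) (q : Fin k → MvPolynomial (Fin d) ℝ), p = ∑ j, q j ^ 2

/-- The quadratic module generated by a single polynomial `g`. -/
def QM1 {d : ℕ} (g : MvPolynomial (Fin d) ℝ) : Set (MvPolynomial (Fin d) ℝ) :=
  {f | ∃ σ₀ σ₁ : MvPolynomial (Fin d) ℝ, IsSOS σ₀ ∧ IsSOS σ₁ ∧ f = σ₀ + σ₁ * g}

/-- `‖X‖² = X₁² + ⋯ + X_d²`. -/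
noncomputable def normSq (d : ℕ) : MvPolynomial (Fin d) ℝ := ∑ i : Fin d, X i ^ 2

/-- `t(f,ρ) = Σ_α |c_α| (ρ+1)^{|α|}`. -/
noncomputable def tBound {d : ℕ} (f : MvPolynomial (Fin d) ℝ) (ρ : ℝ) : ℝ :=
  ∑ α ∈ f.support, |f.coeff α| * (ρ + 1) ^ (α.sum fun _ k => k)

/-!
Write `-t ≤ p ≤ t` for `t ± p ∈ QM1 g`. Since `QM1 g` is closed under sums and products
(a product of two elements of `QM1 g` picks up `g²`, a square), these bounds add and multiply:
`2 (st + pq) = (s + p)(t + q) + (s - p)(t - q)` and similarly for `st - pq`.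
Each variable satisfies `-(ρ+1) ≤ Xᵢ ≤ ρ+1`, because
`2 (ρ + 1 ± Xᵢ) = (1 ± Xᵢ)² + 1 + Xᵢ² + 2 ∑_{j ≠ i} Xⱼ² + 2 (ρ - ‖X‖²)`.
Multiplying these bounds out bounds each monomial `c_α X^α` by `|c_α| (ρ+1)^{|α|}`,
and summing over the support of `f` gives the theorem.
-/

section

variable {d : ℕ}

theorem isSOS_iff_isSumSq {p : MvPolynomial (Fin d) ℝ} : IsSOS p ↔ IsSumSq p := by
  constructor
  · rintro ⟨k, q, rfl⟩
    exact IsSumSq.sum_sq _ q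
  · intro hp
    induction hp with
    | zero => exact ⟨0, ![], by simp⟩
    | sq_add a _ ih =>
      obtain ⟨k, q, rfl⟩ := ih
      exact ⟨k + 1, Fin.cons a q, by simp [Fin.sum_univ_succ, sq]⟩

theorem isSumSq_C {c : ℝ} (hc : 0 ≤ c) : IsSumSq (C c : MvPolynomial (Fin d) ℝ) := by
  rw [← Real.mul_self_sqrt hc, map_mul]
  exact IsSumSq.mul_self _

namespace QM1

variable {g p q : MvPolynomial (Fin d) ℝ}

theorem mem_iff : p ∈ QM1 g ↔ ∃ σ₀ σ₁, IsSumSq σ₀ ∧ IsSumSq σ₁ ∧ p = σ₀ + σ₁ * g := by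
  simp only [QM1, Set.mem_ofPred_eq, isSOS_iff_isSumSq]

theorem mem_of_isSumSq (hp : IsSumSq p) : p ∈ QM1 g :=
  mem_iff.2 ⟨p, 0, hp, .zero, by ring⟩

theorem add_mem (hp : p ∈ QM1 g) (hq : q ∈ QM1 g) : p + q ∈ QM1 g := by
  obtain ⟨a, b, ha, hb, rfl⟩ := mem_iff.1 hp
  obtain ⟨a', b', ha', hb', rfl⟩ := mem_iff.1 hq
  exact mem_iff.2 ⟨a + a', b + b', ha.add ha', hb.add hb', by ring⟩

theorem mul_mem (hp : p ∈ QM1 g) (hq : q ∈ QM1 g) : p * q ∈ QM1 g := by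
  obtain ⟨a, b, ha, hb, rfl⟩ := mem_iff.1 hp
  obtain ⟨a', b', ha', hb', rfl⟩ := mem_iff.1 hq
  exact mem_iff.2 ⟨a * a' + b * b' * (g * g), a * b' + b * a',
    (ha.mul ha').add ((hb.mul hb').mul (.mul_self g)), (ha.mul hb').add (hb.mul ha'), by ring⟩

theorem of_C_two_mul (hp : C 2 * p ∈ QM1 g) : p ∈ QM1 g := by
  have hhalf : C (1 / 2 : ℝ) ∈ QM1 g := mem_of_isSumSq (isSumSq_C (by norm_num))
  convert mul_mem hhalf hp using 1
  rw [← mul_assoc, ← map_mul]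
  norm_num

end QM1

def QM1Bounded (g : MvPolynomial (Fin d) ℝ) (t : ℝ) (p : MvPolynomial (Fin d) ℝ) : Prop :=
  C t + p ∈ QM1 g ∧ C t - p ∈ QM1 g

namespace QM1Bounded

variable {g p q : MvPolynomial (Fin d) ℝ} {s t : ℝ}

theorem zero : QM1Bounded g 0 0 := by
  simpa [QM1Bounded] using QM1.mem_of_isSumSq (g := g) IsSumSq.zero

theorem C_self (c : ℝ) : QM1Bounded g |c| (C c) := by
  constructor
  · rw [← map_add]
    exact QM1.mem_of_isSumSq (isSumSq_C (by linarith [neg_abs_le c]))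
  · rw [← map_sub]
    exact QM1.mem_of_isSumSq (isSumSq_C (by linarith [le_abs_self c]))

theorem add (hp : QM1Bounded g s p) (hq : QM1Bounded g t q) : QM1Bounded g (s + t) (p + q) := by
  constructor
  · convert QM1.add_mem hp.1 hq.1 using 1
    rw [map_add]; ring
  · convert QM1.add_mem hp.2 hq.2 using 1
    rw [map_add]; ring

theorem mul (hp : QM1Bounded g s p) (hq : QM1Bounded g t q) : QM1Bounded g (s * t) (p * q) := by
  constructor <;> apply QM1.of_C_two_mul
  · convert QM1.add_mem (QM1.mul_mem hp.1 hq.1) (QM1.mul_mem hp.2 hq.2) using 1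
    rw [map_mul, map_ofNat]; ring
  · convert QM1.add_mem (QM1.mul_mem hp.1 hq.2) (QM1.mul_mem hp.2 hq.1) using 1
    rw [map_mul, map_ofNat]; ring

theorem pow (hp : QM1Bounded g t p) (n : ℕ) : QM1Bounded g (t ^ n) (p ^ n) := by
  induction n with
  | zero => simpa using C_self (g := g) 1
  | succ n ih => simpa only [pow_succ] using ih.mul hp

theorem sum {ι : Type*} (I : Finset ι) {t : ι → ℝ} {p : ι → MvPolynomial (Fin d) ℝ}
    (h : ∀ i ∈ I, QM1Bounded g (t i) (p i)) : QM1Bounded g (∑ i ∈ I, t i) (∑ i ∈ I, p i) := by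
  classical
  induction I using Finset.induction_on with
  | empty => simpa using zero
  | insert i I hi ih =>
    rw [sum_insert hi, sum_insert hi]
    exact (h i (mem_insert_self i I)).add (ih fun j hj => h j (mem_insert_of_mem hj))

theorem prod {ι : Type*} (I : Finset ι) {t : ι → ℝ} {p : ι → MvPolynomial (Fin d) ℝ}
    (h : ∀ i ∈ I, QM1Bounded g (t i) (p i)) : QM1Bounded g (∏ i ∈ I, t i) (∏ i ∈ I, p i) := by
  classical
  induction I using Finset.induction_on with
  | empty => simpa using C_self (g := g) 1
  | insert i I hi ih =>
    rw [prod_insert hi, prod_insert hi]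
    exact (h i (mem_insert_self i I)).mul (ih fun j hj => h j (mem_insert_of_mem hj))

end QM1Bounded

theorem qm1Bounded_X (ρ : ℝ) (i : Fin d) : QM1Bounded (C ρ - normSq d) (ρ + 1) (X i) := by
  have hnormSq : normSq d = X i ^ 2 + ∑ j ∈ univ.erase i, X j ^ 2 := by
    rw [normSq, ← add_sum_erase _ _ (mem_univ i)]
  have hrest : IsSumSq (∑ j ∈ univ.erase i, (X j : MvPolynomial (Fin d) ℝ) ^ 2) :=
    IsSumSq.sum_sq _ _
  have hsq (a : MvPolynomial (Fin d) ℝ) : IsSumSq (a ^ 2) := by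
    rw [sq]; exact .mul_self a
  have hcert (ε : MvPolynomial (Fin d) ℝ) : IsSumSq ((1 + ε) ^ 2 + 1 + X i ^ 2 +
      (∑ j ∈ univ.erase i, X j ^ 2 + ∑ j ∈ univ.erase i, X j ^ 2)) :=
    (((hsq _).add .one).add (hsq _)).add (hrest.add hrest)
  constructor <;> apply QM1.of_C_two_mul <;> rw [QM1.mem_iff]
  · refine ⟨_, C 2, hcert (X i), isSumSq_C (by norm_num), ?_⟩
    rw [hnormSq, map_add, map_ofNat, C_1]; ring
  · refine ⟨_, C 2, hcert (-X i), isSumSq_C (by norm_num), ?_⟩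
    rw [hnormSq, map_add, map_ofNat, C_1]; ring

theorem qm1Bounded_monomial (ρ : ℝ) (α : Fin d →₀ ℕ) (c : ℝ) :
    QM1Bounded (C ρ - normSq d) (|c| * (ρ + 1) ^ (α.sum fun _ k => k)) (monomial α c) := by
  rw [monomial_eq, Finsupp.prod, Finsupp.sum, ← prod_pow_eq_pow_sum]
  exact (QM1Bounded.C_self c).mul
    (QM1Bounded.prod _ fun i _ => (qm1Bounded_X ρ i).pow (α i))

end

theorem tBound_pm_f_mem_QM1_general (d : ℕ) (f : MvPolynomial (Fin d) ℝ) (ρ : ℝ) :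
    C (tBound f ρ) + f ∈ QM1 (C ρ - normSq d) ∧
    C (tBound f ρ) - f ∈ QM1 (C ρ - normSq d) := by
  have h := QM1Bounded.sum f.support fun α _ => qm1Bounded_monomial ρ α (f.coeff α)
  rwa [← as_sum f] at h

theorem tBound_pm_f_mem_QM1 (d : ℕ) (f : MvPolynomial (Fin d) ℝ) (ρ : ℝ) (hρ : 0 < ρ) :
    C (tBound f ρ) + f ∈ QM1 (C ρ - normSq d) ∧
    C (tBound f ρ) - f ∈ QM1 (C ρ - normSq d) :=
  tBound_pm_f_mem_QM1_general d f ρ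
end

section
/- Let a_1,...,a_m ∈ ℝ[X] be polynomials, S := {x ∈ ℝ^d : a_1(x) ≥ 0,...,a_m(x) ≥ 0}, and let f ∈ ℝ[X] be strictly positive on S. Let B ⊆ ℝ^d be compact. Then there exists g in the quadratic module generated by a_1,...,a_m such that f − g is strictly positive on B. -/
open Finset MvPolynomial

/-- The quadratic module generated by a finite family `a : ι → ℝ[X]`. -/
def QM {d : ℕ} {ι : Type*} [Fintype ι] (a : ι → MvPolynomial (Fin d) ℝ) :
    Set (MvPolynomial (Fin d) ℝ) :=
  {f | ∃ (σ₀ : MvPolynomial (Fin d) ℝ) (σ : ι → MvPolynomial (Fin d) ℝ),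
        IsSOS σ₀ ∧ (∀ i, IsSOS (σ i)) ∧ f = σ₀ + ∑ i, σ i * a i}

/-- Upper bound for a single term `ℓ(t)^(2k) * t` when `t ≤ M`. -/
lemma term_hi (M δ : ℝ) (hM : 0 < M) (hδ : 0 < δ) (k : ℕ) (t : ℝ) (h2 : t ≤ M) :
    (((M + δ / 2)⁻¹ * (M - t)) ^ k) ^ 2 * t ≤ (((M + δ / 2)⁻¹ * M) ^ k) ^ 2 * M := by
  have hs : 0 < M + δ / 2 := by linarith
  rcases le_or_gt t 0 with ht | ht
  · have hA : (((M + δ / 2)⁻¹ * (M - t)) ^ k) ^ 2 * t ≤ 0 :=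
      mul_nonpos_of_nonneg_of_nonpos (sq_nonneg _) ht
    have hBp : 0 ≤ (((M + δ / 2)⁻¹ * M) ^ k) ^ 2 * M :=
      mul_nonneg (sq_nonneg _) hM.le
    linarith
  · have h0 : 0 ≤ (M + δ / 2)⁻¹ * (M - t) :=
      mul_nonneg (inv_nonneg.2 hs.le) (by linarith)
    have hle : (M + δ / 2)⁻¹ * (M - t) ≤ (M + δ / 2)⁻¹ * M :=
      mul_le_mul_of_nonneg_left (by linarith) (inv_nonneg.2 hs.le)
    have hpow : (((M + δ / 2)⁻¹ * (M - t)) ^ k) ^ 2 ≤ (((M + δ / 2)⁻¹ * M) ^ k) ^ 2 :=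
      pow_le_pow_left₀ (pow_nonneg h0 k) (pow_le_pow_left₀ h0 hle k) 2
    nlinarith [sq_nonneg (((M + δ / 2)⁻¹ * (M - t)) ^ k)]

/-- Strongly negative bound for a term with `t ≤ -δ`. -/
lemma term_lo (M δ : ℝ) (hM : 0 < M) (hδ : 0 < δ) (k : ℕ) (t : ℝ) (h2 : t ≤ -δ) :
    (((M + δ / 2)⁻¹ * (M - t)) ^ k) ^ 2 * t ≤ -(δ * (((M + δ / 2)⁻¹ * (M + δ)) ^ k) ^ 2) := by
  have hs : 0 < M + δ / 2 := by linarith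
  have hρ0 : 0 ≤ (M + δ / 2)⁻¹ * (M + δ) :=
    mul_nonneg (inv_nonneg.2 hs.le) (by linarith)
  have hle : (M + δ / 2)⁻¹ * (M + δ) ≤ (M + δ / 2)⁻¹ * (M - t) :=
    mul_le_mul_of_nonneg_left (by linarith) (inv_nonneg.2 hs.le)
  have hpow : (((M + δ / 2)⁻¹ * (M + δ)) ^ k) ^ 2 ≤ (((M + δ / 2)⁻¹ * (M - t)) ^ k) ^ 2 :=
    pow_le_pow_left₀ (pow_nonneg hρ0 k) (pow_le_pow_left₀ hρ0 hle k) 2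
  have hb : 0 ≤ (((M + δ / 2)⁻¹ * (M + δ)) ^ k) ^ 2 := sq_nonneg _
  nlinarith

theorem exists_qm_sub_pos_on_compact (d m : ℕ)
    (a : Fin m → MvPolynomial (Fin d) ℝ) (f : MvPolynomial (Fin d) ℝ)
    (hf : ∀ x : Fin d → ℝ, (∀ j, 0 ≤ eval x (a j)) → 0 < eval x f)
    (B : Set (Fin d → ℝ)) (hB : IsCompact B) :
    ∃ g ∈ QM a, ∀ x ∈ B, 0 < eval x (f - g) := by
  have hzeroSOS : IsSOS (0 : MvPolynomial (Fin d) ℝ) := ⟨0, Fin.elim0, by simp⟩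
  rcases Nat.eq_zero_or_pos m with hm | hm
  · subst hm
    refine ⟨0, ⟨0, 0, hzeroSOS, fun i => i.elim0, by simp⟩, fun x _ => ?_⟩
    simpa using hf x (fun j => j.elim0)
  rcases B.eq_empty_or_nonempty with rfl | hBne
  · exact ⟨0, ⟨0, 0, hzeroSOS, fun _ => hzeroSOS, by simp⟩, by simp⟩
  have : Nonempty (Fin m) := ⟨⟨0, hm⟩⟩
  have hne : (univ : Finset (Fin m)).Nonempty := univ_nonempty
  -- continuity facts
  have hca : ∀ j, Continuous fun x : Fin d → ℝ => eval x (a j) :=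
    fun j => MvPolynomial.continuous_eval (a j)
  have hcf : Continuous fun x : Fin d → ℝ => eval x f := MvPolynomial.continuous_eval f
  -- the auxiliary continuous function Φ
  set Φ : (Fin d → ℝ) → ℝ :=
    fun x => max (eval x f) (univ.sup' hne fun j => -(eval x (a j))) with hΦdef
  have hΦc : Continuous Φ :=
    hcf.max (Continuous.finset_sup'_apply hne fun j _ => (hca j).neg)
  obtain ⟨x₀, hx₀B, hx₀⟩ := hB.exists_isMinOn hBne hΦc.continuousOn
  set c := Φ x₀ with hcdef
  have hc : 0 < c := by
    by_contra h
    push_neg at h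
    have h1 : eval x₀ f ≤ 0 := le_trans (le_max_left _ _) h
    have h2 : ∀ j, 0 ≤ eval x₀ (a j) := by
      intro j
      have := (Finset.le_sup' (fun j => -(eval x₀ (a j))) (mem_univ j)).trans
        ((le_max_right _ _).trans h)
      linarith
    exact absurd (hf x₀ h2) (not_lt.2 h1)
  have hP1 : ∀ x ∈ B, (∀ j, -(c / 2) ≤ eval x (a j)) → c ≤ eval x f := by
    intro x hx hj
    have hcx : c ≤ Φ x := hx₀ hx
    rcases le_max_iff.mp hcx with h | h
    · exact h
    · exfalso
      obtain ⟨j, _, hjle⟩ := Finset.le_sup'_iff hne |>.mp h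
      have := hj j
      linarith
  -- bound M on |a_j| over B
  obtain ⟨M₀, hM₀⟩ := hB.exists_bound_of_continuousOn
    (f := fun x => (fun j => eval x (a j) : Fin m → ℝ))
    (continuous_pi fun j => hca j).continuousOn
  set M : ℝ := max M₀ 1 with hMdef
  have hM : 0 < M := lt_of_lt_of_le one_pos (le_max_right _ _)
  have hMb : ∀ x ∈ B, ∀ j, |eval x (a j)| ≤ M := by
    intro x hx j
    have h1 := norm_le_pi_norm (fun j : Fin m => eval x (a j)) j
    have h2 := hM₀ x hx
    calc |eval x (a j)| ≤ M₀ := by simpa [Real.norm_eq_abs] using h1.trans h2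
      _ ≤ M := le_max_left _ _
  -- bound F on |f| over B
  obtain ⟨F₀, hF₀⟩ := hB.exists_bound_of_continuousOn hcf.continuousOn
  set F : ℝ := max F₀ 0 with hFdef
  have hFb : ∀ x ∈ B, |eval x f| ≤ F := by
    intro x hx
    exact le_trans (by simpa [Real.norm_eq_abs] using hF₀ x hx) (le_max_left _ _)
  set δ : ℝ := c / 2 with hδdef
  have hδ : 0 < δ := by positivity
  have hs : 0 < M + δ / 2 := by linarith
  set r : ℝ := (M + δ / 2)⁻¹ * M with hrdef
  set ρ : ℝ := (M + δ / 2)⁻¹ * (M + δ) with hρdef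
  have hr0 : 0 ≤ r := mul_nonneg (inv_nonneg.2 hs.le) hM.le
  have hr1 : r < 1 := by
    have : (M + δ / 2)⁻¹ * M < (M + δ / 2)⁻¹ * (M + δ / 2) :=
      mul_lt_mul_of_pos_left (by linarith) (inv_pos.2 hs)
    rwa [inv_mul_cancel₀ hs.ne'] at this
  have hρ1 : 1 < ρ := by
    have : (M + δ / 2)⁻¹ * (M + δ / 2) < (M + δ / 2)⁻¹ * (M + δ) :=
      mul_lt_mul_of_pos_left (by linarith) (inv_pos.2 hs)
    rwa [inv_mul_cancel₀ hs.ne'] at this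
  -- choose the exponent k
  obtain ⟨k₁, hk₁⟩ := exists_pow_lt_of_lt_one
    (show (0 : ℝ) < c / (m * M + 1) by positivity) hr1
  obtain ⟨k₂, hk₂⟩ := pow_unbounded_of_one_lt ((F + c) / δ) hρ1
  set k := max k₁ k₂ with hkdef
  have hrk : (r ^ k) ^ 2 * (m * M) < c := by
    have e1 : r ^ k ≤ r ^ k₁ := pow_le_pow_of_le_one hr0 hr1.le (le_max_left _ _)
    have e2 : r ^ k ≤ 1 := pow_le_one₀ hr0 hr1.le
    have e3 : 0 ≤ r ^ k := pow_nonneg hr0 k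
    have e4 : r ^ k₁ * (m * M + 1) < c := by
      have hpos : (0 : ℝ) < m * M + 1 := by positivity
      calc r ^ k₁ * (m * M + 1) < c / (m * M + 1) * (m * M + 1) := by
            exact mul_lt_mul_of_pos_right hk₁ hpos
        _ = c := div_mul_cancel₀ _ hpos.ne'
    have e5 : 0 ≤ (m : ℝ) * M := by positivity
    have e6 : (r ^ k) ^ 2 ≤ r ^ k₁ := by nlinarith [mul_le_mul_of_nonneg_left e2 e3]
    have e7 : 0 ≤ r ^ k₁ := pow_nonneg hr0 _
    linarith [mul_le_mul_of_nonneg_right e6 e5]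
  have hρk : F + c < δ * (ρ ^ k) ^ 2 := by
    have e1 : ρ ^ k₂ ≤ ρ ^ k := pow_le_pow_right₀ hρ1.le (le_max_right _ _)
    have e2 : 1 ≤ ρ ^ k := by
      simpa using pow_le_pow_right₀ hρ1.le (Nat.zero_le k)
    have e3 : F + c < ρ ^ k₂ * δ := by
      have := (div_lt_iff₀ hδ).mp hk₂
      linarith
    have e4 : ρ ^ k ≤ (ρ ^ k) ^ 2 := by nlinarith
    have e5 : δ * ρ ^ k₂ ≤ δ * ρ ^ k := mul_le_mul_of_nonneg_left e1 hδ.le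
    have e6 : δ * ρ ^ k ≤ δ * (ρ ^ k) ^ 2 := mul_le_mul_of_nonneg_left e4 hδ.le
    linarith
  -- the polynomial multipliers
  set Lp : Fin m → MvPolynomial (Fin d) ℝ :=
    fun j => C ((M + δ / 2)⁻¹) * (C M - a j) with hLpdef
  refine ⟨∑ j, (Lp j ^ k) ^ 2 * a j,
    ⟨0, fun j => (Lp j ^ k) ^ 2, hzeroSOS,
      fun j => ⟨1, fun _ => Lp j ^ k, by simp⟩, (zero_add _).symm⟩, ?_⟩
  intro x hxB
  have hev : eval x (f - ∑ j, (Lp j ^ k) ^ 2 * a j) =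
      eval x f - ∑ j, (((M + δ / 2)⁻¹ * (M - eval x (a j))) ^ k) ^ 2 * eval x (a j) := by
    simp [hLpdef, map_sub, map_sum, map_mul, map_pow, eval_C]
  rw [hev]
  set t : Fin m → ℝ := fun j => eval x (a j) with htdef
  set η : ℝ := (r ^ k) ^ 2 * M with hηdef
  have hη0 : 0 ≤ η := mul_nonneg (sq_nonneg _) hM.le
  have hterm_hi : ∀ j, (((M + δ / 2)⁻¹ * (M - t j)) ^ k) ^ 2 * t j ≤ η := by
    intro j
    exact term_hi M δ hM hδ k (t j) ((abs_le.mp (hMb x hxB j)).2)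
  have hmη : (m : ℝ) * η < c := by
    have : (m : ℝ) * η = (r ^ k) ^ 2 * (m * M) := by ring
    linarith [hrk, this.le, this.ge]
  by_cases hcase : ∀ j, -(c / 2) ≤ t j
  · have hfx : c ≤ eval x f := hP1 x hxB hcase
    have hsum : ∑ j, (((M + δ / 2)⁻¹ * (M - t j)) ^ k) ^ 2 * t j ≤ (m : ℝ) * η := by
      calc ∑ j, (((M + δ / 2)⁻¹ * (M - t j)) ^ k) ^ 2 * t j ≤ ∑ _j : Fin m, η :=
            Finset.sum_le_sum fun j _ => hterm_hi j
        _ = (m : ℝ) * η := by simp [mul_comm]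
    linarith
  · push_neg at hcase
    obtain ⟨j₀, hj₀⟩ := hcase
    have hsplit : ∑ j, (((M + δ / 2)⁻¹ * (M - t j)) ^ k) ^ 2 * t j =
        (((M + δ / 2)⁻¹ * (M - t j₀)) ^ k) ^ 2 * t j₀ +
          ∑ j ∈ univ.erase j₀, (((M + δ / 2)⁻¹ * (M - t j)) ^ k) ^ 2 * t j :=
      (Finset.add_sum_erase _ _ (mem_univ j₀)).symm
    have h1 : (((M + δ / 2)⁻¹ * (M - t j₀)) ^ k) ^ 2 * t j₀ ≤ -(δ * (ρ ^ k) ^ 2) :=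
      term_lo M δ hM hδ k (t j₀) (by rw [hδdef]; linarith)
    have h2 : ∑ j ∈ univ.erase j₀, (((M + δ / 2)⁻¹ * (M - t j)) ^ k) ^ 2 * t j ≤ (m : ℝ) * η := by
      calc ∑ j ∈ univ.erase j₀, (((M + δ / 2)⁻¹ * (M - t j)) ^ k) ^ 2 * t j
          ≤ ∑ _j ∈ univ.erase j₀, η := Finset.sum_le_sum fun j _ => hterm_hi j
        _ ≤ ∑ _j : Fin m, η :=
            Finset.sum_le_sum_of_subset_of_nonneg (Finset.subset_univ _) fun _ _ _ => hη0
        _ = (m : ℝ) * η := by simp [mul_comm]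
    have hfF : -F ≤ eval x f := by
      have := abs_le.mp (hFb x hxB)
      linarith [this.1]
    linarith [hsplit.le, hsplit.ge]
end

section
/- (Handelman's theorem) Let a_1,...,a_m ∈ ℝ[X] all be polynomials of degree at most 1 and suppose the polyhedron S := {x ∈ ℝ^d : a_1(x) ≥ 0,...,a_m(x) ≥ 0} is nonempty and bounded. Then every polynomial f ∈ ℝ[X] strictly positive on S belongs to the semiring cone generated by a_1,...,a_m, i.e., f is a finite sum of terms λ·a_1^{k_1}⋯a_m^{k_m} with λ ≥ 0 real and k_i nonnegative integers. -/
/-!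
Because the polyhedron `S` is bounded and nonempty, no nonzero direction `v` keeps all the
`a j` nonnegative along `x₀ + t v`; by Farkas' lemma the linear parts of the `a j` then positively
span everything, so every affine polynomial is a constant plus a nonnegative combination of the
`a j`. In particular `∑ j, t j * a j = c` for some `t j > 0` and a constant `c ≥ 0`.

If `c = 0`, then `S = {x₀}` and both `±(X i - x₀ i)` lie in the cone, which then contains every
polynomial that is nonnegative at `x₀` (expand around `x₀`). If `c > 0`, the `p j = t j * a j / c`
form a partition of unity that generates all polynomials. Write `f` as a polynomial in the `p j`,
add a sum of squares vanishing under the substitution to make it positive on the whole simplex,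
and homogenize with `∑ j, p j = 1`. Pólya's theorem then makes all coefficients nonnegative
after multiplying by a power of `∑ j, p j = 1`.
-/

open Finset MvPolynomial

/-- The semiring cone generated by a finite family `a : ι → ℝ[X]`: all finite sums of
terms `λ · a₁^{k₁} ⋯ a_m^{k_m}` with `λ ≥ 0` real and `kᵢ` nonnegative integers. -/
def SCone {d : ℕ} {ι : Type*} [Fintype ι] (a : ι → MvPolynomial (Fin d) ℝ) :
    Set (MvPolynomial (Fin d) ℝ) :=
  {f | ∃ (N : ℕ) (c : Fin N → ℝ) (k : Fin N → ι → ℕ),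
        (∀ j, 0 ≤ c j) ∧ f = ∑ j, C (c j) * ∏ i, a i ^ k j i}

namespace SCone

variable {d : ℕ} {ι : Type*} [Fintype ι] {a : ι → MvPolynomial (Fin d) ℝ}

theorem sum_mem_of_fintype {α : Type*} [Fintype α] (c : α → ℝ) (k : α → ι → ℕ)
    (hc : ∀ x, 0 ≤ c x) : ∑ x, C (c x) * ∏ i, a i ^ k x i ∈ SCone a := by
  let e := Fintype.equivFin α
  refine ⟨Fintype.card α, c ∘ e.symm, k ∘ e.symm, fun j => hc _, ?_⟩
  exact (e.symm.sum_comp fun x => C (c x) * ∏ i, a i ^ k x i).symm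

theorem add_mem {f g : MvPolynomial (Fin d) ℝ} (hf : f ∈ SCone a) (hg : g ∈ SCone a) :
    f + g ∈ SCone a := by
  obtain ⟨N, c, k, hc, rfl⟩ := hf
  obtain ⟨N', c', k', hc', rfl⟩ := hg
  convert sum_mem_of_fintype (Sum.elim c c') (Sum.elim k k') (Sum.rec hc hc') using 1
  simp [Fintype.sum_sum_type]

theorem mul_mem {f g : MvPolynomial (Fin d) ℝ} (hf : f ∈ SCone a) (hg : g ∈ SCone a) :
    f * g ∈ SCone a := by
  obtain ⟨N, c, k, hc, rfl⟩ := hf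
  obtain ⟨N', c', k', hc', rfl⟩ := hg
  convert sum_mem_of_fintype (fun x : Fin N × Fin N' => c x.1 * c' x.2)
    (fun x i => k x.1 i + k' x.2 i) (fun x => mul_nonneg (hc x.1) (hc' x.2)) using 1
  rw [sum_mul_sum, ← Fintype.sum_prod_type']
  refine Fintype.sum_congr _ _ fun x => ?_
  simp only [map_mul, pow_add, prod_mul_distrib]
  ring

variable (a) in
def toSubsemiring : Subsemiring (MvPolynomial (Fin d) ℝ) where
  carrier := SCone a
  zero_mem' := by simpa using sum_mem_of_fintype (a := a) (α := Empty) 0 0 (by simp)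
  one_mem' := by simpa using sum_mem_of_fintype (a := a) (α := Unit) 1 0 (by simp)
  add_mem' := add_mem
  mul_mem' := mul_mem

theorem C_mem {c : ℝ} (hc : 0 ≤ c) : C c ∈ SCone a := by
  simpa using sum_mem_of_fintype (a := a) (α := Unit) (fun _ => c) 0 (fun _ => hc)

theorem self_mem (j : ι) : a j ∈ SCone a := by
  classical
  simpa [Pi.single_apply, pow_ite] using
    sum_mem_of_fintype (a := a) (α := Unit) 1 (fun _ => Pi.single j 1) (by simp)

end SCone

namespace Subsemiring

section Lineality

variable {R : Type*} [Ring R] (S : Subsemiring R)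

def lineality : Set R := {w | w ∈ S ∧ -w ∈ S}

variable {S}

theorem neg_mem_lineality {u : R} (hu : u ∈ S.lineality) : -u ∈ S.lineality :=
  ⟨hu.2, by simpa using hu.1⟩

theorem add_mem_lineality {u v : R} (hu : u ∈ S.lineality) (hv : v ∈ S.lineality) :
    u + v ∈ S.lineality :=
  ⟨S.add_mem hu.1 hv.1, by rw [neg_add_rev]; exact S.add_mem hv.2 hu.2⟩

theorem mul_mem_lineality {u v : R} (hu : u ∈ S.lineality) (hv : v ∈ S) :
    u * v ∈ S.lineality :=
  ⟨S.mul_mem hu.1 hv, by simpa using S.mul_mem hu.2 hv⟩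

end Lineality

variable {σ : Type*} {S : Subsemiring (MvPolynomial σ ℝ)} (hC : ∀ c : ℝ, 0 ≤ c → C c ∈ S)
include hC

theorem C_mul_mem_lineality (r : ℝ) {w : MvPolynomial σ ℝ} (hw : w ∈ S.lineality) :
    C r * w ∈ S.lineality := by
  rcases le_total 0 r with hr | hr
  · simpa [mul_comm] using mul_mem_lineality hw (hC r hr)
  · simpa [mul_comm] using mul_mem_lineality (neg_mem_lineality hw) (hC (-r) (neg_nonneg.2 hr))

theorem aeval_mem_of_coeff_nonneg {ι : Type*} {p : ι → MvPolynomial σ ℝ} (hp : ∀ j, p j ∈ S)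
    {H : MvPolynomial ι ℝ} (hH : ∀ β, 0 ≤ coeff β H) : aeval p H ∈ S := by
  rw [H.as_sum, map_sum]
  refine S.sum_mem fun β _ => ?_
  rw [aeval_monomial, algebraMap_eq]
  exact S.mul_mem (hC _ (hH β)) (S.prod_mem fun j _ => S.pow_mem (hp j) _)

theorem sub_C_eval_mem_lineality {x : σ → ℝ} (hX : ∀ i, X i - C (x i) ∈ S.lineality)
    (g : MvPolynomial σ ℝ) : g - C (eval x g) ∈ S.lineality := by
  induction g using MvPolynomial.induction_on with
  | C r => simp [lineality, S.zero_mem]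
  | add g h hg hh =>
    convert add_mem_lineality hg hh using 1
    simp only [map_add]
    ring
  | mul_X g i hg =>
    have key : g * X i - C (eval x (g * X i))
        = (g - C (eval x g)) * (X i - C (x i)) + C (eval x g) * (X i - C (x i))
          + C (x i) * (g - C (eval x g)) := by
      simp only [eval_X, map_mul]
      ring
    rw [key]
    exact add_mem_lineality (add_mem_lineality (mul_mem_lineality hg (hX i).1)
      (C_mul_mem_lineality hC _ (hX i))) (C_mul_mem_lineality hC _ hg)

theorem mem_of_X_sub_C_mem_lineality {x : σ → ℝ} (hX : ∀ i, X i - C (x i) ∈ S.lineality)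
    {f : MvPolynomial σ ℝ} (hf : 0 ≤ eval x f) : f ∈ S := by
  simpa using S.add_mem (hC _ hf) (sub_C_eval_mem_lineality hC hX f).1

end Subsemiring

namespace MvPolynomial

variable {σ : Type*}

noncomputable def linearPart : MvPolynomial σ ℝ →ₗ[ℝ] σ → ℝ :=
  LinearMap.pi fun i => lcoeff ℝ (Finsupp.single i 1)

theorem linearPart_apply (g : MvPolynomial σ ℝ) (i : σ) :
    linearPart g i = coeff (Finsupp.single i 1) g := rfl

variable [Fintype σ]

theorem eq_C_add_sum_of_totalDegree_le_one {g : MvPolynomial σ ℝ} (hg : g.totalDegree ≤ 1) :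
    g = C (coeff 0 g) + ∑ i, C (linearPart g i) * X i := by
  classical
  ext v
  simp only [coeff_add, coeff_C, coeff_sum, coeff_C_mul, coeff_X, mul_ite, mul_one, mul_zero,
    linearPart_apply]
  rcases lt_or_ge 1 v.degree with hv | hv
  · have hv0 : v ≠ 0 := by rintro rfl; simp at hv
    have hv1 : ∀ i, Finsupp.single i 1 ≠ v := by rintro i rfl; simp at hv
    simp [coeff_eq_zero_of_totalDegree_lt (hg.trans_lt hv), Ne.symm hv0, hv1]
  rcases hv.eq_or_lt with hv | hv
  · obtain ⟨i, rfl⟩ : v ∈ Set.range fun i => Finsupp.single i 1 := by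
      rw [Finsupp.range_single_one]; exact hv
    simp [Finsupp.single_left_inj, (Finsupp.single_ne_zero.2 one_ne_zero).symm]
  · obtain rfl : v = 0 := (Finsupp.degree_eq_zero_iff v).1 (by omega)
    simp

theorem eval_eq_of_totalDegree_le_one {g : MvPolynomial σ ℝ} (hg : g.totalDegree ≤ 1)
    (x : σ → ℝ) : eval x g = coeff 0 g + linearPart g ⬝ᵥ x := by
  conv_lhs => rw [eq_C_add_sum_of_totalDegree_le_one hg]
  simp [dotProduct]

end MvPolynomial

theorem eq_zero_of_isBounded_of_forall_add_smul_mem {E : Type*} [NormedAddCommGroup E]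
    [NormedSpace ℝ E] {s : Set E} (hs : Bornology.IsBounded s) {x v : E}
    (h : ∀ t : ℝ, 0 ≤ t → x + t • v ∈ s) : v = 0 := by
  obtain ⟨R, hR⟩ := hs.exists_norm_le
  by_contra hv
  have hv : 0 < ‖v‖ := norm_pos_iff.2 hv
  have hxR : ‖x‖ ≤ R := by simpa using hR _ (h 0 le_rfl)
  set t := (R + ‖x‖ + 1) / ‖v‖
  have ht : 0 ≤ t := div_nonneg (by linarith [norm_nonneg x]) hv.le
  have htv : ‖t • v‖ = R + ‖x‖ + 1 := by
    rw [norm_smul, Real.norm_of_nonneg ht, div_mul_cancel₀ _ hv.ne']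
  have := norm_sub_le (x + t • v) x
  rw [add_sub_cancel_left, htv] at this
  linarith [hR _ (h t ht)]

theorem Convex.eq_univ_of_closure_eq_univ {E : Type*} [NormedAddCommGroup E] [NormedSpace ℝ E]
    [FiniteDimensional ℝ E] {s : Set E} (hs : Convex ℝ s) (h : closure s = Set.univ) :
    s = Set.univ := by
  have hspan : affineSpan ℝ s = ⊤ := by
    rw [← AffineSubspace.coe_eq_univ_iff, ← Set.univ_subset_iff, ← h]
    exact (AffineSubspace.closed_of_finiteDimensional _).closure_subset_iff.2
      (subset_affineSpan ℝ s)
  obtain ⟨z, hz⟩ := hs.interior_nonempty_iff_affineSpan_eq_top.2 hspan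
  refine Set.eq_univ_of_forall fun w => ?_
  have h2wz : (2 : ℝ) • w - z ∈ closure s := h ▸ Set.mem_univ _
  have := interior_subset <| hs.combo_interior_closure_mem_interior hz h2wz
    (by norm_num : (0 : ℝ) < 1 / 2) (by norm_num : (0 : ℝ) ≤ 1 / 2) (by norm_num)
  rwa [show (1 / 2 : ℝ) • z + (1 / 2 : ℝ) • ((2 : ℝ) • w - z) = w by module] at this

theorem exists_nonneg_sum_smul_eq {σ ι : Type*} [Fintype σ] [Fintype ι] {L : ι → σ → ℝ}
    (hL : ∀ v, (∀ j, 0 ≤ L j ⬝ᵥ v) → v = 0) (w : σ → ℝ) :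
    ∃ μ : ι → ℝ, (∀ j, 0 ≤ μ j) ∧ ∑ j, μ j • L j = w := by
  classical
  let K : PointedCone ℝ (σ → ℝ) := PointedCone.hull ℝ (Set.range L)
  have hclosure : closure (K : Set (σ → ℝ)) = Set.univ := by
    refine Set.eq_univ_of_forall fun z => by_contra fun hz => ?_
    obtain ⟨f, u, hfz, hfK⟩ :=
      geometric_hahn_banach_point_closed K.convex.closure isClosed_closure hz
    have hu : u < 0 := by simpa using hfK 0 (subset_closure K.zero_mem)
    have hfL : ∀ j, 0 ≤ f (L j) := fun j => by
      by_contra! hj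
      have hmem : (u / f (L j)) • L j ∈ K :=
        K.smul_mem (div_nonneg_of_nonpos hu.le hj.le) (PointedCone.subset_hull ⟨j, rfl⟩)
      have := hfK _ (subset_closure hmem)
      rw [map_smul, smul_eq_mul, div_mul_cancel₀ _ hj.ne] at this
      exact lt_irrefl _ this
    have hf : ∀ y, f y = (fun i => f (Pi.single i 1)) ⬝ᵥ y := fun y => by
      conv_lhs => rw [pi_eq_sum_univ' y]
      simp [dotProduct, mul_comm]
    have hf0 := hL _ fun j => by rw [dotProduct_comm, ← hf]; exact hfL j
    rw [hf, hf0, zero_dotProduct] at hfz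
    linarith
  have hw : w ∈ K := by
    rw [← SetLike.mem_coe, K.convex.eq_univ_of_closure_eq_univ hclosure]
    trivial
  obtain ⟨c, hc⟩ := (Submodule.mem_span_range_iff_exists_fun _).1 hw
  exact ⟨fun j => c j, fun j => (c j).2, hc⟩

def ConeSpansAffine {σ ι : Type*} [Fintype ι] (a : ι → MvPolynomial σ ℝ) : Prop :=
  ∀ g : MvPolynomial σ ℝ, g.totalDegree ≤ 1 →
    ∃ (b : ℝ) (μ : ι → ℝ), (∀ j, 0 ≤ μ j) ∧ g = C b + ∑ j, C (μ j) * a j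

section Polyhedron

variable {σ ι : Type*} [Fintype ι] {a : ι → MvPolynomial σ ℝ}

theorem coneSpansAffine_of_isBounded [Fintype σ] (ha : ∀ j, (a j).totalDegree ≤ 1)
    (hne : {x : σ → ℝ | ∀ j, 0 ≤ eval x (a j)}.Nonempty)
    (hbdd : Bornology.IsBounded {x : σ → ℝ | ∀ j, 0 ≤ eval x (a j)}) : ConeSpansAffine a := by
  intro g hg
  obtain ⟨x₀, hx₀⟩ := hne
  have hrec : ∀ v : σ → ℝ, (∀ j, 0 ≤ linearPart (a j) ⬝ᵥ v) → v = 0 := fun v hv =>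
    eq_zero_of_isBounded_of_forall_add_smul_mem hbdd fun t ht j => by
      have := hx₀ j
      rw [eval_eq_of_totalDegree_le_one (ha j)] at this ⊢
      simp only [dotProduct_add, dotProduct_smul, smul_eq_mul]
      nlinarith [mul_nonneg ht (hv j)]
  obtain ⟨μ, hμ, hμg⟩ := exists_nonneg_sum_smul_eq hrec (linearPart g)
  set r := g - ∑ j, C (μ j) * a j
  have hr : r.totalDegree ≤ 1 :=
    (totalDegree_sub _ _).trans <| max_le hg <| (totalDegree_finsetSum _ _).trans <|
      Finset.sup_le fun j _ => (totalDegree_mul _ _).trans (by simpa using ha j)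
  have hlin : linearPart r = 0 := by simp [r, ← smul_eq_C_mul, hμg]
  have hr_const := eq_C_add_sum_of_totalDegree_le_one hr
  simp only [hlin, Pi.zero_apply, map_zero, zero_mul, sum_const_zero, add_zero] at hr_const
  exact ⟨coeff 0 r, μ, hμ, by rw [← hr_const, sub_add_cancel]⟩

theorem ConeSpansAffine.exists_pos_sum_C_mul_eq_C (h : ConeSpansAffine a)
    (ha : ∀ j, (a j).totalDegree ≤ 1) :
    ∃ (t : ι → ℝ) (c : ℝ), (∀ j, 0 < t j) ∧ ∑ j, C (t j) * a j = C c := by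
  have hdeg : (-∑ j, a j).totalDegree ≤ 1 := by
    rw [totalDegree_neg]
    exact (totalDegree_finsetSum _ _).trans (Finset.sup_le fun j _ => ha j)
  obtain ⟨b, μ, hμ, hb⟩ := h _ hdeg
  refine ⟨fun j => 1 + μ j, -b, fun j => by linarith [hμ j], ?_⟩
  simp only [C_add, map_one, add_mul, one_mul, sum_add_distrib, map_neg]
  linear_combination -hb

end Polyhedron

theorem IsCompact.exists_pos_add_mul {X : Type*} [TopologicalSpace X] {K : Set X}
    (hK : IsCompact K) {g φ : X → ℝ} (hg : Continuous g) (hφ : Continuous φ)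
    (hφ₀ : ∀ y ∈ K, 0 ≤ φ y) (h : ∀ y ∈ K, φ y = 0 → 0 < g y) :
    ∃ M : ℝ, ∀ y ∈ K, 0 < g y + M * φ y := by
  obtain ⟨B, hB⟩ := hK.bddBelow_image hg.continuousOn
  have hK' : IsCompact {y ∈ K | g y ≤ 0} := hK.inter_right (isClosed_le hg continuous_const)
  obtain ⟨δ, hδ, hφδ⟩ := hK'.exists_forall_le' hφ.continuousOn (a := 0) fun y hy =>
    (hφ₀ y hy.1).lt_of_ne fun h0 => (h y hy.1 h0.symm).not_ge hy.2
  refine ⟨(|B| + 1) / δ, fun y hy => ?_⟩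
  rcases le_or_gt (g y) 0 with hgy | hgy
  · have h1 : |B| + 1 ≤ (|B| + 1) / δ * φ y := by
      rw [div_mul_eq_mul_div, le_div_iff₀ hδ]
      exact mul_le_mul_of_nonneg_left (hφδ y ⟨hy, hgy⟩) (by positivity)
    linarith [hB ⟨y, hy, rfl⟩, neg_abs_le B]
  · have : 0 ≤ (|B| + 1) / δ * φ y := mul_nonneg (by positivity) (hφ₀ y hy)
    linarith

theorem abs_prod_sub_prod_le {γ : Type*} (s : Finset γ) {u v : γ → ℝ}
    (hu : ∀ t ∈ s, |u t| ≤ 1) (hv : ∀ t ∈ s, |v t| ≤ 1) :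
    |∏ t ∈ s, u t - ∏ t ∈ s, v t| ≤ ∑ t ∈ s, |u t - v t| := by
  induction s using Finset.cons_induction with
  | empty => simp
  | cons a s ha ih =>
    rw [prod_cons, prod_cons, sum_cons]
    have hus := ih (fun t ht => hu t (mem_cons_of_mem ht)) (fun t ht => hv t (mem_cons_of_mem ht))
    have hua : |u a| ≤ 1 := hu a (mem_cons_self a s)
    have hvs : |∏ t ∈ s, v t| ≤ 1 := by
      rw [abs_prod]
      exact prod_le_one (fun _ _ => abs_nonneg _) fun t ht => hv t (mem_cons_of_mem ht)
    calc |u a * ∏ t ∈ s, u t - v a * ∏ t ∈ s, v t|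
        = |u a * (∏ t ∈ s, u t - ∏ t ∈ s, v t) + (u a - v a) * ∏ t ∈ s, v t| := by ring_nf
      _ ≤ |u a| * |∏ t ∈ s, u t - ∏ t ∈ s, v t| + |u a - v a| * |∏ t ∈ s, v t| := by
        rw [← abs_mul, ← abs_mul]; exact abs_add_le _ _
      _ ≤ 1 * ∑ t ∈ s, |u t - v t| + |u a - v a| * 1 := by gcongr
      _ = |u a - v a| + ∑ t ∈ s, |u t - v t| := by ring

theorem Nat.cast_descFactorial_eq_prod_range {R : Type*} [CommRing R] (b a : ℕ) :
    (b.descFactorial a : R) = ∏ j ∈ range a, ((b : R) - j) := by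
  rw [← descPochhammer_eval_eq_descFactorial, descPochhammer_eval_eq_prod_range]

theorem Finsupp.multinomial_sub_mul_prod_factorial {ι : Type*} [Fintype ι] {α β : ι →₀ ℕ}
    (h : α ≤ β) :
    (β - α).multinomial * ∏ i, (β i).factorial
      = (β - α).degree.factorial * ∏ i, (β i).descFactorial (α i) := by
  have hfac : ∀ i, (β i).factorial = ((β - α) i).factorial * (β i).descFactorial (α i) :=
    fun i => by rw [Finsupp.tsub_apply, Nat.factorial_mul_descFactorial (h i)]
  rw [Finset.prod_congr rfl fun i _ => hfac i, prod_mul_distrib,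
    Finsupp.multinomial_eq_of_support_subset (subset_univ _), Finsupp.degree_eq_sum,
    ← Nat.multinomial_spec]
  ring

namespace MvPolynomial

section Homogenize

variable {R ι : Type*} [CommSemiring R] [Fintype ι]

theorem isHomogeneous_sum_X : (∑ i, X i : MvPolynomial ι R).IsHomogeneous 1 :=
  IsHomogeneous.sum _ _ _ fun i _ => isHomogeneous_X R i

noncomputable def homogenizeBySum (n : ℕ) (p : MvPolynomial ι R) : MvPolynomial ι R :=
  ∑ α ∈ p.support, monomial α (coeff α p) * (∑ i, X i) ^ (n - α.degree)

theorem isHomogeneous_homogenizeBySum {n : ℕ} {p : MvPolynomial ι R} (hp : p.totalDegree ≤ n) :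
    (homogenizeBySum n p).IsHomogeneous n := by
  refine IsHomogeneous.sum _ _ _ fun α hα => ?_
  have hαn : α.degree ≤ n := (le_totalDegree hα).trans hp
  convert (isHomogeneous_monomial (coeff α p) rfl).mul (isHomogeneous_sum_X.pow (n - α.degree))
    using 1
  omega

theorem aeval_homogenizeBySum {S : Type*} [CommSemiring S] [Algebra R S] {x : ι → S}
    (hx : ∑ i, x i = 1) (n : ℕ) (p : MvPolynomial ι R) :
    aeval x (homogenizeBySum n p) = aeval x p := by
  simp only [homogenizeBySum, map_sum, map_mul, map_pow, aeval_X, hx, one_pow, mul_one]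
  rw [← map_sum, ← p.as_sum]

theorem eval_homogenizeBySum {x : ι → R} (hx : ∑ i, x i = 1) (n : ℕ) (p : MvPolynomial ι R) :
    eval x (homogenizeBySum n p) = eval x p :=
  aeval_homogenizeBySum hx n p

end Homogenize

section Polya

variable {ι : Type*} [Fintype ι]

theorem coeff_sum_X_pow_mul_mul_prod_factorial {G : MvPolynomial ι ℝ} {n N : ℕ}
    (hG : G.IsHomogeneous n) {β : ι →₀ ℕ} (hβ : β.degree = N + n) :
    coeff β ((∑ i, X i) ^ N * G) * ∏ i, ((β i).factorial : ℝ)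
      = N.factorial * ∑ α ∈ G.support, coeff α G * ∏ i, ((β i).descFactorial (α i) : ℝ) := by
  conv_lhs => rw [G.as_sum]
  rw [mul_sum, coeff_sum, sum_mul, mul_sum]
  refine sum_congr rfl fun α hα => ?_
  rw [coeff_mul_monomial']
  split_ifs with hle
  · have hdeg : (β - α).degree = N := by
      have := congrArg Finsupp.degree (tsub_add_cancel_of_le hle)
      have hα' : α.degree = n := by
        rw [Finsupp.degree_eq_weight_one]; exact hG (mem_support_iff.1 hα)
      rw [map_add, hβ, hα'] at this
      omega
    rw [coeff_sum_X_pow_of_fintype, if_pos (by exact hdeg)]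
    have := congrArg (Nat.cast (R := ℝ)) (Finsupp.multinomial_sub_mul_prod_factorial hle)
    push_cast [hdeg] at this
    linear_combination coeff α G * this
  · obtain ⟨i, hi⟩ : ∃ i, β i < α i := by
      by_contra! h; exact hle fun i => h i
    rw [zero_mul, prod_eq_zero (f := fun i => ((β i).descFactorial (α i) : ℝ)) (mem_univ i)
      (by simp [Nat.descFactorial_eq_zero_iff_lt.2 hi])]
    simp

theorem abs_prod_descFactorial_div_sub_prod_le {α β : ι →₀ ℕ} {n s : ℕ} (hα : α.degree = n)
    (hβ : β.degree = s) (hns : n ≤ s) :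
    |(∏ i, ((β i).descFactorial (α i) : ℝ)) / s ^ n - ∏ i, ((β i : ℝ) / s) ^ α i|
      ≤ n ^ 2 / s := by
  set P := univ.sigma fun i => range (α i)
  have hP : #P = n := by simp [P, ← hα, Finsupp.degree_eq_sum]
  have hβs : ∀ i, (β i : ℝ) ≤ s := fun i => by exact_mod_cast hβ ▸ Finsupp.le_degree i β
  have hjn : ∀ x ∈ P, (x.2 : ℝ) ≤ n := fun x hx => by
    have := (mem_sigma.1 hx).2
    exact_mod_cast (mem_range.1 this).le.trans (hα ▸ Finsupp.le_degree x.1 α)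
  have h1 : (∏ i, ((β i).descFactorial (α i) : ℝ)) / s ^ n
      = ∏ x ∈ P, ((β x.1 : ℝ) - x.2) / s := by
    rw [prod_div_distrib, prod_const, hP, prod_sigma]
    simp_rw [Nat.cast_descFactorial_eq_prod_range]
  have h2 : ∏ i, ((β i : ℝ) / s) ^ α i = ∏ x ∈ P, (β x.1 : ℝ) / s := by
    simp only [P, prod_sigma, prod_const, card_range]
  rw [h1, h2]
  refine (abs_prod_sub_prod_le P (fun x hx => ?_) (fun x _ => ?_)).trans ?_
  · rw [abs_div, Nat.abs_cast]
    refine div_le_one_of_le₀ (abs_le.2 ⟨?_, ?_⟩) (Nat.cast_nonneg _)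
    · linarith [hjn x hx, (Nat.cast_le (α := ℝ)).2 hns, Nat.cast_nonneg (α := ℝ) (β x.1)]
    · linarith [hβs x.1, Nat.cast_nonneg (α := ℝ) x.2]
  · rw [abs_div, Nat.abs_cast, Nat.abs_cast]
    exact div_le_one_of_le₀ (hβs x.1) (Nat.cast_nonneg _)
  calc ∑ x ∈ P, |((β x.1 : ℝ) - x.2) / s - (β x.1 : ℝ) / s|
      = ∑ x ∈ P, (x.2 : ℝ) / s := sum_congr rfl fun x _ => by
        rw [← sub_div, sub_sub_cancel_left, abs_div, abs_neg, Nat.abs_cast, Nat.abs_cast]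
    _ ≤ ∑ _x ∈ P, (n : ℝ) / s :=
        sum_le_sum fun x hx => div_le_div_of_nonneg_right (hjn x hx) (Nat.cast_nonneg _)
    _ = n ^ 2 / s := by rw [sum_const, hP, nsmul_eq_mul]; ring

theorem sum_coeff_mul_prod_descFactorial_pos {G : MvPolynomial ι ℝ} {n : ℕ}
    (hG : G.IsHomogeneous n) {ε : ℝ} (hεG : ∀ y ∈ stdSimplex ℝ ι, ε ≤ eval y G)
    {β : ι →₀ ℕ} {s : ℕ} (hβ : β.degree = s) (hns : n ≤ s) (hs : 0 < s)
    (herr : (∑ α ∈ G.support, |coeff α G|) * (n ^ 2 / s) < ε) :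
    0 < ∑ α ∈ G.support, coeff α G * ∏ i, ((β i).descFactorial (α i) : ℝ) := by
  have hs : (0 : ℝ) < s := Nat.cast_pos.2 hs
  set y : ι → ℝ := fun i => β i / s
  have hy : y ∈ stdSimplex ℝ ι := by
    refine ⟨fun i => by positivity, ?_⟩
    rw [← sum_div, ← Nat.cast_sum, ← Finsupp.degree_eq_sum, hβ, div_self hs.ne']
  have hterm : ∀ α ∈ G.support, coeff α G * ∏ i, y i ^ α i - |coeff α G| * (n ^ 2 / s)
      ≤ coeff α G * ((∏ i, ((β i).descFactorial (α i) : ℝ)) / s ^ n) := fun α hα => by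
    have hαn : α.degree = n := by
      rw [Finsupp.degree_eq_weight_one]; exact hG (mem_support_iff.1 hα)
    have := mul_le_mul_of_nonneg_left (abs_prod_descFactorial_div_sub_prod_le hαn hβ hns)
      (abs_nonneg (coeff α G))
    rw [← abs_mul] at this
    linarith [(abs_le.1 this).1]
  have hsum := sum_le_sum hterm
  rw [sum_sub_distrib, ← sum_mul, ← eval_eq'] at hsum
  have hrescale : ∑ α ∈ G.support, coeff α G * ∏ i, ((β i).descFactorial (α i) : ℝ)
      = s ^ n * ∑ α ∈ G.support,
          coeff α G * ((∏ i, ((β i).descFactorial (α i) : ℝ)) / s ^ n) := by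
    rw [mul_sum]
    exact sum_congr rfl fun α _ => by field_simp
  rw [hrescale]
  exact mul_pos (by positivity) (by linarith [hεG y hy])

/-- **Pólya's theorem**. -/
theorem exists_coeff_sum_X_pow_mul_nonneg {G : MvPolynomial ι ℝ} {n : ℕ}
    (hG : G.IsHomogeneous n) (hpos : ∀ y ∈ stdSimplex ℝ ι, 0 < eval y G) :
    ∃ N : ℕ, ∀ β, 0 ≤ coeff β ((∑ i, X i) ^ N * G) := by
  obtain ⟨ε, hε, hεG⟩ := (isCompact_stdSimplex ℝ ι).exists_forall_le'
    (continuous_eval G).continuousOn hpos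
  set A := ∑ α ∈ G.support, |coeff α G|
  obtain ⟨N, hN⟩ := exists_nat_gt (A * n ^ 2 / ε)
  have hN0 : 0 < N := Nat.cast_pos.1 <| (div_nonneg (by positivity) hε.le).trans_lt hN
  refine ⟨N, fun β => ?_⟩
  by_cases hβ : β.degree = N + n
  swap
  · rw [((isHomogeneous_sum_X.pow N).mul hG).coeff_eq_zero (by simpa using hβ)]
  have herr : A * (n ^ 2 / (N + n : ℕ)) < ε := by
    rw [← mul_div_assoc, div_lt_iff₀ (by positivity)]
    rw [div_lt_iff₀ hε] at hN
    push_cast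
    nlinarith [Nat.cast_nonneg (α := ℝ) n]
  have hsum := sum_coeff_mul_prod_descFactorial_pos hG hεG hβ (by omega) (by omega) herr
  have key := coeff_sum_X_pow_mul_mul_prod_factorial hG hβ
  have hfac : (0 : ℝ) < ∏ i, ((β i).factorial : ℝ) := by positivity
  exact (pos_of_mul_pos_left (key ▸ mul_pos (by positivity) hsum) hfac.le).le

end Polya

end MvPolynomial

theorem exists_coeff_nonneg_aeval_eq {σ ι : Type*} [Fintype ι]
    {p : ι → MvPolynomial σ ℝ} (hp : ∑ j, p j = 1) (hsurj : Function.Surjective (aeval (R := ℝ) p))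
    {f : MvPolynomial σ ℝ} (hf : ∀ x, (∀ j, 0 ≤ eval x (p j)) → 0 < eval x f) :
    ∃ H : MvPolynomial ι ℝ, (∀ β, 0 ≤ coeff β H) ∧ aeval p H = f := by
  choose q hq using fun i => hsurj (X i)
  have hpq : ∀ r, aeval p (bind₁ q r) = r := fun r => by
    rw [aeval_bind₁, funext hq, aeval_X_left_apply]
  have heval : ∀ y r, eval y (bind₁ q r) = eval (fun i => eval y (q i)) r := fun y r =>
    eval₂Hom_bind₁ _ _ _ _
  -- `Φ y = 0` means `p (q y) = y`, so for `y` in the simplex the point `q y` has all `p j ≥ 0`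
  set Φ : MvPolynomial ι ℝ := ∑ j, (bind₁ q (p j) - X j) ^ 2
  obtain ⟨M, hM⟩ := (isCompact_stdSimplex ℝ ι).exists_pos_add_mul
    (continuous_eval (bind₁ q f)) (continuous_eval Φ)
    (fun y _ => by simp only [Φ, map_sum, map_pow]; positivity) fun y hy hΦ => by
      simp only [Φ, map_sum, map_pow] at hΦ
      have hpy : ∀ j, eval y (bind₁ q (p j)) = y j := fun j => by
        have := (sum_eq_zero_iff_of_nonneg fun j _ => sq_nonneg _).1 hΦ j (mem_univ j)
        simpa [sub_eq_zero] using this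
      rw [heval]
      exact hf _ fun j => by rw [← heval, hpy]; exact hy.1 j
  set R := bind₁ q f + C M * Φ
  have hR : aeval p R = f := by
    simp only [R, Φ, map_add, map_mul, map_sum, map_pow, map_sub, hpq, aeval_X, sub_self]
    simp
  obtain ⟨N, hN⟩ := exists_coeff_sum_X_pow_mul_nonneg
    (isHomogeneous_homogenizeBySum (le_refl R.totalDegree)) fun y hy => by
      rw [eval_homogenizeBySum hy.2]
      simpa [R] using hM y hy
  refine ⟨_, hN, ?_⟩
  simp only [map_mul, map_pow, map_sum, aeval_X, hp, one_pow, one_mul, aeval_homogenizeBySum hp,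
    hR]

namespace SCone

variable {d : ℕ} {ι : Type*} [Fintype ι] {a : ι → MvPolynomial (Fin d) ℝ}

theorem mem_of_eval_eq_zero (h : ConeSpansAffine a) {x₀ : Fin d → ℝ}
    (hx₀ : ∀ j, eval x₀ (a j) = 0) {f : MvPolynomial (Fin d) ℝ} (hf : 0 ≤ eval x₀ f) :
    f ∈ SCone a := by
  have hmem : ∀ g : MvPolynomial (Fin d) ℝ, g.totalDegree ≤ 1 → eval x₀ g = 0 → g ∈ SCone a := by
    intro g hg hg₀
    obtain ⟨b, μ, hμ, rfl⟩ := h g hg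
    obtain rfl : b = 0 := by simpa [hx₀] using hg₀
    rw [map_zero, zero_add]
    exact (toSubsemiring a).sum_mem fun j _ => mul_mem (C_mem (hμ j)) (self_mem j)
  have hdeg : ∀ i, (X i - C (x₀ i) : MvPolynomial (Fin d) ℝ).totalDegree ≤ 1 := fun i =>
    (totalDegree_sub_C_le _ _).trans (totalDegree_X i).le
  refine (toSubsemiring a).mem_of_X_sub_C_mem_lineality (fun _ => C_mem)
    (fun i => ⟨hmem _ (hdeg i) ?_, hmem _ ((totalDegree_neg _).trans_le (hdeg i)) ?_⟩) hf <;>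
    simp

theorem mem_of_sum_C_mul_eq_C (h : ConeSpansAffine a) {t : ι → ℝ} (ht : ∀ j, 0 < t j)
    {c : ℝ} (hc : 0 < c) (hsum : ∑ j, C (t j) * a j = C c) {f : MvPolynomial (Fin d) ℝ}
    (hf : ∀ x, (∀ j, 0 ≤ eval x (a j)) → 0 < eval x f) : f ∈ SCone a := by
  set p : ι → MvPolynomial (Fin d) ℝ := fun j => C (t j / c) * a j
  have hp : ∑ j, p j = 1 := by
    simp_rw [p, div_eq_mul_inv, mul_comm (t _), C_mul, mul_assoc, ← mul_sum, hsum, ← C_mul,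
      inv_mul_cancel₀ hc.ne', C_1]
  have hX : ∀ i, ∃ r, aeval p r = X i := fun i => by
    obtain ⟨b, μ, -, hb⟩ := h (X i) (totalDegree_X i).le
    refine ⟨∑ j, C (b + μ j * c / t j) * X j, ?_⟩
    have hterm : ∀ j, C (b + μ j * c / t j) * p j = C b * p j + C (μ j) * a j := fun j => by
      have e : (b + μ j * c / t j) * (t j / c) = b * (t j / c) + μ j := by
        field_simp [(ht j).ne', hc.ne']
      rw [← mul_assoc, ← C_mul, e, C_add, C_mul, add_mul, mul_assoc]
    simp only [map_sum, map_mul, aeval_C, aeval_X, algebraMap_eq, hterm, sum_add_distrib,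
      ← mul_sum, hp, mul_one, hb]
  choose q hq using hX
  have hsurj : Function.Surjective (aeval (R := ℝ) p) := fun g =>
    ⟨bind₁ q g, by rw [aeval_bind₁, funext hq, aeval_X_left_apply]⟩
  obtain ⟨H, hH, rfl⟩ := exists_coeff_nonneg_aeval_eq hp hsurj fun x hx => hf x fun j => by
    have := hx j
    simp only [p, eval_mul, eval_C] at this
    exact (mul_nonneg_iff_of_pos_left (div_pos (ht j) hc)).1 this
  exact (toSubsemiring a).aeval_mem_of_coeff_nonneg (fun _ => C_mem)
    (fun j => mul_mem (C_mem (div_pos (ht j) hc).le) (self_mem j)) hH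

end SCone

theorem handelman (d m : ℕ) (a : Fin m → MvPolynomial (Fin d) ℝ)
    (ha : ∀ j, (a j).totalDegree ≤ 1)
    (hne : {x : Fin d → ℝ | ∀ j, 0 ≤ eval x (a j)}.Nonempty)
    (hbdd : Bornology.IsBounded {x : Fin d → ℝ | ∀ j, 0 ≤ eval x (a j)})
    (f : MvPolynomial (Fin d) ℝ)
    (hf : ∀ x : Fin d → ℝ, (∀ j, 0 ≤ eval x (a j)) → 0 < eval x f) :
    f ∈ SCone a := by
  have hspan := coneSpansAffine_of_isBounded ha hne hbdd
  obtain ⟨t, c, ht, hsum⟩ := hspan.exists_pos_sum_C_mul_eq_C ha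
  obtain ⟨x₀, hx₀⟩ := hne
  have heval : ∑ j, t j * eval x₀ (a j) = c := by simpa using congrArg (eval x₀) hsum
  have hterm : ∀ j ∈ univ, 0 ≤ t j * eval x₀ (a j) := fun j _ => mul_nonneg (ht j).le (hx₀ j)
  rcases (heval ▸ sum_nonneg hterm).eq_or_lt with hc | hc
  · refine SCone.mem_of_eval_eq_zero hspan (x₀ := x₀) (fun j => ?_) (hf x₀ hx₀).le
    have := (sum_eq_zero_iff_of_nonneg hterm).1 (heval.trans hc.symm) j (mem_univ j)
    exact (mul_eq_zero.1 this).resolve_left (ht j).ne'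
  · exact SCone.mem_of_sum_C_mul_eq_C hspan ht hc hsum hf
end

section
/- (Pólya's theorem) Let f ∈ ℝ[X_1,...,X_d] be homogeneous and strictly positive on the standard simplex Δ := {x ∈ ℝ^d : x_i ≥ 0 for all i, x_1 + ⋯ + x_d = 1}. Then there exists N ∈ ℤ_{≥0} such that all coefficients of (X_1 + ⋯ + X_d)^N · f are nonnegative. -/
/-! For `f = ∑ c_α X^α` put `f_t(x) = ∑ c_α ∏ᵢ xᵢ (xᵢ - t) ⋯ (xᵢ - (αᵢ - 1) t)`, so that `f_0 = f`.
Expanding `(∑ Xᵢ)^N` by the multinomial theorem, the coefficient of `X^β` in `(∑ Xᵢ)^N f`, for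
`|β| = N + n`, is `N! (N + n)^n / β!` times `f_{1/(N+n)}(β / (N + n))`. The map `(t, x) ↦ f_t(x)`
is continuous and positive on `{0} × Δ`, hence, `Δ` being compact, on `[0, δ) × Δ` for some
`δ > 0`; as `β / (N + n) ∈ Δ`, all these coefficients are positive once `1 / (N + n) < δ`. -/

open Filter Finset MvPolynomial Topology
open scoped Nat

theorem Finsupp.multinomial_tsub_mul_prod_factorial {σ : Type*} [Fintype σ] {α β : σ →₀ ℕ}
    (h : α ≤ β) :
    (β - α).multinomial * ∏ i, (β i)! = (β - α).degree ! * ∏ i, (β i).descFactorial (α i) := by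
  have hfac (i : σ) : (β i)! = ((β - α) i)! * (β i).descFactorial (α i) :=
    (Nat.factorial_mul_descFactorial (h i)).symm
  rw [Finset.prod_congr rfl fun i _ ↦ hfac i, prod_mul_distrib, ← mul_assoc,
    ← Finsupp.multinomial_of_support_subset (subset_univ _), mul_comm (Nat.multinomial _ _),
    Nat.multinomial_spec, degree_eq_sum]

namespace MvPolynomial

variable {σ R : Type*} [Fintype σ]

theorem coeff_sum_X_pow_mul_monomial_mul_prod_factorial [CommSemiring R] {N : ℕ}
    {α β : σ →₀ ℕ} (h : α.degree + N = β.degree) (c : R) :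
    coeff β ((∑ i, X i) ^ N * monomial α c) * ∏ i, ((β i)! : R) =
      N ! * c * ∏ i, ((β i).descFactorial (α i) : R) := by
  rw [coeff_mul_monomial']
  split_ifs with hle
  · have hdeg : (β - α).degree = N := by
      have := map_add Finsupp.degree (β - α) α
      rw [tsub_add_cancel_of_le hle] at this
      omega
    have hsum : (β - α).sum (fun _ m ↦ m) = N := hdeg
    have key : ((β - α).multinomial : R) * ∏ i, ((β i)! : R) =
        N ! * ∏ i, ((β i).descFactorial (α i) : R) := by
      have := Finsupp.multinomial_tsub_mul_prod_factorial hle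
      rw [hdeg] at this
      exact_mod_cast congrArg (Nat.cast : ℕ → R) this
    rw [coeff_sum_X_pow_of_fintype, if_pos hsum]
    calc _ = c * (((β - α).multinomial : R) * ∏ i, ((β i)! : R)) := by ring
      _ = _ := by rw [key]; ring
  · obtain ⟨i, hi⟩ : ∃ i, β i < α i := by
      by_contra! hge
      exact hle hge
    rw [zero_mul, prod_eq_zero (mem_univ i) (by rw [Nat.descFactorial_of_lt hi, Nat.cast_zero]),
      mul_zero]

section fallingEval

variable [CommRing R]

def fallingEval (t : R) (x : σ → R) (f : MvPolynomial σ R) : R :=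
  ∑ α ∈ f.support, f.coeff α * ∏ i, ∏ j ∈ range (α i), (x i - j * t)

theorem fallingEval_zero (x : σ → R) (f : MvPolynomial σ R) : fallingEval 0 x f = eval x f := by
  simp [fallingEval, eval_eq']

theorem fallingEval_one_natCast (β : σ → ℕ) (f : MvPolynomial σ R) :
    fallingEval 1 (fun i ↦ (β i : R)) f =
      ∑ α ∈ f.support, f.coeff α * ∏ i, ((β i).descFactorial (α i) : R) := by
  simp [fallingEval, ← descPochhammer_eval_eq_descFactorial, descPochhammer_eval_eq_prod_range]

theorem IsHomogeneous.fallingEval_smul {f : MvPolynomial σ R} {n : ℕ} (hf : f.IsHomogeneous n)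
    (c t : R) (x : σ → R) : fallingEval (c * t) (c • x) f = c ^ n * fallingEval t x f := by
  rw [fallingEval, fallingEval, mul_sum]
  refine sum_congr rfl fun α hα ↦ ?_
  have hdeg : ∑ i, α i = n := by
    rw [← Finsupp.degree_eq_sum]
    exact (hf.degree_eq_sum_deg_support hα).symm
  have hfactor (i : σ) : ∏ j ∈ range (α i), ((c • x) i - j * (c * t)) =
      c ^ α i * ∏ j ∈ range (α i), (x i - j * t) := by
    calc _ = ∏ j ∈ range (α i), (c * (x i - j * t)) :=
          prod_congr rfl fun j _ ↦ by rw [Pi.smul_apply, smul_eq_mul]; ring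
      _ = _ := by rw [prod_mul_distrib, prod_const, card_range]
  simp_rw [hfactor, prod_mul_distrib, prod_pow_eq_pow_sum, hdeg]
  ring

theorem continuous_fallingEval [TopologicalSpace R] [IsTopologicalRing R]
    (f : MvPolynomial σ R) : Continuous fun p : R × (σ → R) ↦ fallingEval p.1 p.2 f := by
  unfold fallingEval
  fun_prop

end fallingEval

theorem IsHomogeneous.coeff_sum_X_pow_mul_mul_prod_factorial [CommRing R]
    {f : MvPolynomial σ R} {n N : ℕ} (hf : f.IsHomogeneous n) {β : σ →₀ ℕ}
    (hβ : β.degree = N + n) :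
    coeff β ((∑ i, X i) ^ N * f) * ∏ i, ((β i)! : R) =
      N ! * fallingEval 1 (fun i ↦ (β i : R)) f := by
  conv_lhs => rw [f.as_sum, mul_sum, coeff_sum, sum_mul]
  rw [fallingEval_one_natCast, mul_sum]
  refine sum_congr rfl fun α hα ↦ ?_
  have hα : α.degree + N = β.degree := by
    have hdeg : α.degree = n := (hf.degree_eq_sum_deg_support hα).symm
    omega
  rw [coeff_sum_X_pow_mul_monomial_mul_prod_factorial hα, mul_assoc]

theorem inv_degree_smul_mem_stdSimplex {𝕜 : Type*} [Field 𝕜] [LinearOrder 𝕜]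
    [IsStrictOrderedRing 𝕜] {β : σ →₀ ℕ} (hβ : β.degree ≠ 0) :
    ((β.degree : 𝕜)⁻¹ • fun i ↦ (β i : 𝕜)) ∈ stdSimplex 𝕜 σ := by
  refine ⟨fun i ↦ by simp only [Pi.smul_apply, smul_eq_mul]; positivity, ?_⟩
  simp only [Pi.smul_apply, smul_eq_mul, ← mul_sum]
  rw [← Nat.cast_sum, ← Finsupp.degree_eq_sum, inv_mul_cancel₀ (by exact_mod_cast hβ)]

theorem IsHomogeneous.coeff_sum_X_pow_mul_pos {f : MvPolynomial σ ℝ} {n N : ℕ}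
    (hf : f.IsHomogeneous n) {β : σ →₀ ℕ} (hβ : β.degree = N + n) (hβ₀ : β.degree ≠ 0)
    (hpos : 0 < fallingEval (β.degree : ℝ)⁻¹ ((β.degree : ℝ)⁻¹ • fun i ↦ (β i : ℝ)) f) :
    0 < coeff β ((∑ i, X i) ^ N * f) := by
  have hs : (β.degree : ℝ) ≠ 0 := by exact_mod_cast hβ₀
  have hscale := hf.fallingEval_smul (β.degree : ℝ) (β.degree : ℝ)⁻¹
    ((β.degree : ℝ)⁻¹ • fun i ↦ (β i : ℝ))
  rw [mul_inv_cancel₀ hs, smul_inv_smul₀ hs] at hscale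
  refine pos_of_mul_pos_left (b := ∏ i, ((β i)! : ℝ)) ?_ (by positivity)
  rw [hf.coeff_sum_X_pow_mul_mul_prod_factorial hβ, hscale]
  positivity

theorem eventually_forall_stdSimplex_fallingEval_pos {f : MvPolynomial σ ℝ}
    (hpos : ∀ x ∈ stdSimplex ℝ σ, 0 < eval x f) :
    ∀ᶠ t in 𝓝 0, ∀ x ∈ stdSimplex ℝ σ, 0 < fallingEval t x f :=
  (isCompact_stdSimplex ℝ σ).eventually_forall_of_forall_eventually fun x hx ↦
    (continuous_fallingEval f).continuousAt.preimage_mem_nhds <|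
      Ioi_mem_nhds <| (fallingEval_zero x f).symm ▸ hpos x hx

theorem IsHomogeneous.eventually_coeff_sum_X_pow_mul_nonneg {f : MvPolynomial σ ℝ} {n : ℕ}
    (hf : f.IsHomogeneous n) (hpos : ∀ x ∈ stdSimplex ℝ σ, 0 < eval x f) :
    ∀ᶠ N in atTop, ∀ β, 0 ≤ coeff β ((∑ i, X i) ^ N * f) := by
  have hinv : Tendsto (fun N : ℕ ↦ ((N + n : ℕ) : ℝ)⁻¹) atTop (𝓝 0) :=
    tendsto_inv_atTop_zero.comp <| tendsto_natCast_atTop_atTop.comp <| tendsto_add_atTop_nat n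
  filter_upwards [hinv.eventually (eventually_forall_stdSimplex_fallingEval_pos hpos),
    eventually_gt_atTop 0] with N hN hN₀ β
  by_cases hβ : β.degree = N + n
  · have hβ₀ : β.degree ≠ 0 := by omega
    refine (hf.coeff_sum_X_pow_mul_pos hβ hβ₀ ?_).le
    rw [← hβ] at hN
    exact hN _ (inv_degree_smul_mem_stdSimplex hβ₀)
  · have hhom : ((∑ i, X i) ^ N * f).IsHomogeneous (1 * N + n) :=
      ((IsHomogeneous.sum _ _ 1 fun i _ ↦ isHomogeneous_X ℝ i).pow N).mul hf
    rw [hhom.coeff_eq_zero (by omega)]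

end MvPolynomial

theorem polya (d n : ℕ) (f : MvPolynomial (Fin d) ℝ) (hf : f.IsHomogeneous n)
    (hpos : ∀ x : Fin d → ℝ, (∀ i, 0 ≤ x i) → (∑ i, x i) = 1 → 0 < eval x f) :
    ∃ N : ℕ, ∀ α : Fin d →₀ ℕ, 0 ≤ ((∑ i : Fin d, X i) ^ N * f).coeff α :=
  (hf.eventually_coeff_sum_X_pow_mul_nonneg fun x hx ↦ hpos x hx.1 hx.2).exists
end
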